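/- arXiv:2203.05504 — 3 statements merged into one kernel-verified Lean document; each statement's English description precedes it below -/
import Mathlib

section
/- For n ≥ 3, the group of units of the monoid DPS_n, namely {α ∈ DPS_n : the domain of α has n elements}, is isomorphic (as a group, equivalently as a monoid) to the symmetric group on the set {1,2,...,n−1} of n−1 elements. -/
/-
A partial isometry whose domain has `n` elements is a total injective map, i.e. a permutation of
the vertices preserving the star distance. For `n ≥ 3` the centre `0` is the only vertex at
distance `1` from two distinct vertices, so such a permutation fixes `0`; conversely every
permutation fixing `0` preserves the distance. The units are therefore the permutations of the
`n - 1` leaves.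
-/

namespace DPSPaper

instance instMonoidPFun {V : Type*} : Monoid (V →. V) where
  mul f g := g.comp f
  one := PFun.id V
  mul_assoc a b c := (PFun.comp_assoc c b a).symm
  one_mul := PFun.comp_id
  mul_one := PFun.id_comp

/-- The geodesic distance in the star graph `S_n` on vertices `{0,1,...,n-1}`. -/
def starDist (n : ℕ) (x y : Fin n) : ℕ :=
  if x = y then 0 else if (x : ℕ) = 0 ∨ (y : ℕ) = 0 then 1 else 2

/-- Injectivity of a partial map. -/
def PInj {n : ℕ} (α : Fin n →. Fin n) : Prop :=
  ∀ ⦃x y a : Fin n⦄, a ∈ α x → a ∈ α y → x = y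

/-- `α` is a partial isometry of the star graph `S_n`. -/
def IsStarPI {n : ℕ} (α : Fin n →. Fin n) : Prop :=
  PInj α ∧ ∀ ⦃x y u v : Fin n⦄, u ∈ α x → v ∈ α y → starDist n u v = starDist n x y

/-- The set of all partial isometries of `S_n`. -/
def DPSset (n : ℕ) : Set (Fin n →. Fin n) := { α | IsStarPI α }

open Equiv Equiv.Perm

-- `σ⁻¹` because the product on partial maps applies the left factor first.
def permToPFun {V : Type*} : Perm V →* (V →. V) where
  toFun σ := PFun.lift ⇑σ⁻¹
  map_one' := rfl
  map_mul' σ τ := PFun.coe_comp ⇑τ⁻¹ ⇑σ⁻¹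

theorem permToPFun_injective {V : Type*} :
    Function.Injective (permToPFun : Perm V →* (V →. V)) :=
  fun _ _ h => inv_injective <| DFunLike.coe_injective (PFun.lift_injective h :)

theorem _root_.PFun.exists_eq_lift_of_dom_eq_univ {α β : Type*} {f : α →. β}
    (h : f.Dom = Set.univ) : ∃ g : α → β, f = g :=
  ⟨fun a => (f a).get (h.symm ▸ Set.mem_univ a : a ∈ f.Dom),
    funext fun _ => (Part.some_get _).symm⟩

theorem _root_.Equiv.Perm.range_ofSubtype_ne {α : Type*} [DecidableEq α] (a : α) :
    Set.range (ofSubtype : Perm {x // x ≠ a} →* Perm α) = {σ | σ a = a} := by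
  ext σ
  refine ⟨?_, fun ha => ⟨σ.subtypePerm fun _ => σ.injective.ne_iff' ha,
    ofSubtype_subtypePerm _ fun _ hx hxa => hx (hxa ▸ ha)⟩⟩
  rintro ⟨τ, rfl⟩
  exact ofSubtype_apply_of_not_mem τ (not_not.mpr rfl)

section Star
variable {n : ℕ} [NeZero n]

theorem starDist_eq_one_iff {x y : Fin n} :
    starDist n x y = 1 ↔ x ≠ y ∧ (x = 0 ∨ y = 0) := by
  unfold starDist
  split_ifs <;> simp_all [Fin.val_eq_zero_iff]

theorem eq_zero_of_starDist_eq_one {a b c : Fin n} (hab : a ≠ b)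
    (ha : starDist n c a = 1) (hb : starDist n c b = 1) : c = 0 := by
  rw [starDist_eq_one_iff] at ha hb
  grind

theorem starDist_comp {f : Fin n → Fin n} (hf : Function.Injective f) (h0 : f 0 = 0)
    (x y : Fin n) : starDist n (f x) (f y) = starDist n x y := by
  simp only [starDist, hf.eq_iff, Fin.val_eq_zero_iff, hf.eq_iff' h0]

theorem isStarPI_lift_iff (hn : 3 ≤ n) {f : Fin n → Fin n} :
    IsStarPI (f : Fin n →. Fin n) ↔ Function.Injective f ∧ f 0 = 0 := by
  simp only [IsStarPI, PInj, PFun.coe_val, Part.mem_some_iff]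
  constructor
  · rintro ⟨hinj, hdist⟩
    have hf : Function.Injective f := fun _ _ h => hinj rfl h
    have hdist_zero (k : ℕ) (hk : k < n) (hk0 : k ≠ 0) :
        starDist n (f 0) (f ⟨k, hk⟩) = 1 := by
      rw [hdist rfl rfl, starDist_eq_one_iff]
      simp [Fin.ext_iff, hk0.symm]
    refine ⟨hf, eq_zero_of_starDist_eq_one ?_ (hdist_zero 1 (by omega) one_ne_zero)
      (hdist_zero 2 (by omega) two_ne_zero)⟩
    simp [hf.ne_iff, Fin.ext_iff]
  · rintro ⟨hf, h0⟩
    refine ⟨fun _ _ _ hx hy => hf (hx.symm.trans hy), ?_⟩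
    rintro x y _ _ rfl rfl
    exact starDist_comp hf h0 x y

theorem setOf_isStarPI_ncard_dom_eq (hn : 3 ≤ n) :
    {α : Fin n →. Fin n | IsStarPI α ∧ α.Dom.ncard = n} = permToPFun '' {σ | σ 0 = 0} := by
  ext α
  constructor
  · rintro ⟨hα, hcard⟩
    obtain ⟨f, rfl⟩ := PFun.exists_eq_lift_of_dom_eq_univ
      ((Set.eq_univ_iff_ncard _).2 (by rwa [Nat.card_fin]))
    obtain ⟨hf, h0⟩ := (isStarPI_lift_iff hn).1 hα
    let σ := Equiv.ofBijective f (Finite.injective_iff_bijective.1 hf)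
    exact ⟨σ⁻¹, σ.symm_apply_eq.2 h0.symm,
      congrArg PFun.lift (congrArg DFunLike.coe (inv_inv σ))⟩
  · rintro ⟨σ, hσ, rfl⟩
    refine ⟨(isStarPI_lift_iff hn).2 ⟨σ⁻¹.injective, Perm.inv_eq_iff_eq.2 hσ.symm⟩, ?_⟩
    exact (Set.ncard_univ _).trans (Nat.card_fin n)

end Star

/-- For `n ≥ 3`, the group of units `{α ∈ DPS_n : |Dom α| = n}` of `DPS_n` is isomorphic
to the symmetric group on `n-1` elements: there is an injective monoid homomorphism from
`Perm (Fin (n-1))` into the monoid of partial maps whose range is exactly this set. -/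
theorem statement4 (n : ℕ) (hn : 3 ≤ n) :
    ∃ φ : Equiv.Perm (Fin (n - 1)) →* (Fin n →. Fin n),
      Function.Injective φ ∧
      Set.range φ = { α : Fin n →. Fin n | IsStarPI α ∧ α.Dom.ncard = n } := by
  obtain ⟨m, rfl⟩ : ∃ m, n = m + 1 := ⟨n - 1, by omega⟩
  refine ⟨permToPFun.comp (ofSubtype.comp (finSuccAboveEquiv 0).permCongrHom.toMonoidHom),
    permToPFun_injective.comp (ofSubtype_injective.comp (MulEquiv.injective _)), ?_⟩
  rw [setOf_isStarPI_ncard_dom_eq hn, MonoidHom.coe_comp, Set.range_comp, MonoidHom.coe_comp,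
    Set.range_comp, MulEquiv.coe_toMonoidHom, (MulEquiv.surjective _).range_eq, Set.image_univ,
    range_ofSubtype_ne]

end DPSPaper
end

section
/- For n ≥ 3, the subset {α ∈ DPS_n : 0 is in the domain of α and 0α = 0} is a submonoid of DPS_n, and it is isomorphic as a monoid to the symmetric inverse monoid on {1,2,...,n−1}, i.e., the monoid under composition of all injective partial maps on a set with n−1 elements. An isomorphism is given by sending an injective partial map ξ on {1,...,n−1} to its extension ξ̄ defined by 0ξ̄ = 0 and ξ̄ agreeing with ξ on the domain of ξ. -/
/-!
A partial isometry is injective, so one that fixes the centre `0` sends leaves to leaves and is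
therefore the extension `ξ̄` of its restriction `ξ` to the leaves. Conversely, for injective `ξ`
the map `ξ̄` is an isometry, since the distance in the star graph only records which points
coincide and which one is the centre.
-/

namespace DPSPaper

/-- The extension `ξ̄` of a partial map `ξ` on `{1,...,n-1}` (modelled on `Fin (n-1)`,
`i` corresponding to the vertex `i+1`) to `{0,1,...,n-1}`, fixing `0`. -/
def barMap (n : ℕ) (ξ : Fin (n - 1) →. Fin (n - 1)) : Fin n →. Fin n :=
  fun x =>
    if h : (x : ℕ) = 0 then Part.some x
    else (ξ ⟨(x : ℕ) - 1, by have := x.isLt; omega⟩).map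
      (fun j : Fin (n - 1) => ⟨(j : ℕ) + 1, by have := j.isLt; omega⟩)

theorem _root_.Part.mem_map_iff_of_injective {α β : Type*} {f : α → β} (hf : Function.Injective f)
    {o : Part α} {a : α} : f a ∈ o.map f ↔ a ∈ o := by
  rw [Part.mem_map_iff]
  exact ⟨fun ⟨b, hb, hba⟩ => hf hba ▸ hb, fun ha => ⟨a, ha, rfl⟩⟩

theorem _root_.Part.map_injective {α β : Type*} {f : α → β} (hf : Function.Injective f) :
    Function.Injective (Part.map f) := fun o p h =>
  Part.ext fun a => by
    rw [← Part.mem_map_iff_of_injective hf, h, Part.mem_map_iff_of_injective hf]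

section PFun

variable {V : Type*}

theorem pfun_mul_apply (α β : V →. V) (x : V) : (α * β) x = (α x).bind fun y => β y := rfl

theorem pfun_one_apply (x : V) : (1 : V →. V) x = Part.some x := rfl

end PFun

variable {n : ℕ}

theorem PInj.eq_iff {α : Fin n →. Fin n} (hα : PInj α) {x y u v : Fin n} (hu : u ∈ α x)
    (hv : v ∈ α y) : u = v ↔ x = y :=
  ⟨fun huv => hα hu (huv ▸ hv), fun hxy => Part.mem_unique hu (hxy ▸ hv)⟩

theorem PInj.mul {α β : Fin n →. Fin n} (hα : PInj α) (hβ : PInj β) : PInj (α * β) := by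
  intro x y a hx hy
  rw [pfun_mul_apply, Part.mem_bind_iff] at hx hy
  obtain ⟨u, hu, hau⟩ := hx
  obtain ⟨v, hv, hav⟩ := hy
  obtain rfl : u = v := hβ hau hav
  exact hα hu hv

theorem isStarPI_one : IsStarPI (1 : Fin n →. Fin n) := by
  refine ⟨fun x y a hx hy => ?_, fun x y u v hu hv => ?_⟩
  · rw [pfun_one_apply, Part.mem_some_iff] at hx hy
    exact hx.symm.trans hy
  · rw [pfun_one_apply, Part.mem_some_iff] at hu hv
    rw [hu, hv]

theorem IsStarPI.mul {α β : Fin n →. Fin n} (hα : IsStarPI α) (hβ : IsStarPI β) :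
    IsStarPI (α * β) := by
  refine ⟨hα.1.mul hβ.1, fun x y u v hu hv => ?_⟩
  rw [pfun_mul_apply, Part.mem_bind_iff] at hu hv
  obtain ⟨x', hx', hu⟩ := hu
  obtain ⟨y', hy', hv⟩ := hv
  rw [hβ.2 hu hv, hα.2 hx' hy']

theorem starDist_congr {u v x y : Fin n} (h1 : u = v ↔ x = y)
    (h2 : (u : ℕ) = 0 ↔ (x : ℕ) = 0) (h3 : (v : ℕ) = 0 ↔ (y : ℕ) = 0) :
    starDist n u v = starDist n x y := by
  unfold starDist
  split_ifs <;> tauto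

def succVertex (n : ℕ) (i : Fin (n - 1)) : Fin n := ⟨i + 1, by omega⟩

@[simp]
theorem val_succVertex (i : Fin (n - 1)) : (succVertex n i : ℕ) = i + 1 := rfl

theorem val_succVertex_ne_zero (i : Fin (n - 1)) : (succVertex n i : ℕ) ≠ 0 :=
  Nat.succ_ne_zero _

theorem succVertex_injective : Function.Injective (succVertex n) := fun i j h =>
  Fin.ext (by simpa [Fin.ext_iff] using h)

theorem val_eq_zero_or_exists_succVertex_eq (x : Fin n) :
    (x : ℕ) = 0 ∨ ∃ i, succVertex n i = x := by
  by_cases hx : (x : ℕ) = 0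
  · exact .inl hx
  · exact .inr ⟨⟨x - 1, by omega⟩, Fin.ext (by simp; omega)⟩

def predVertex (n : ℕ) : Fin n →. Fin (n - 1) :=
  fun x => ⟨(x : ℕ) ≠ 0, fun _ => ⟨x - 1, by omega⟩⟩

theorem mem_predVertex {x : Fin n} {i : Fin (n - 1)} :
    i ∈ predVertex n x ↔ succVertex n i = x := by
  simp only [predVertex, Part.mem_mk_iff, Fin.ext_iff, val_succVertex, exists_prop]
  omega

theorem barMap_of_val_eq_zero (ξ : Fin (n - 1) →. Fin (n - 1)) {x : Fin n} (hx : (x : ℕ) = 0) :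
    barMap n ξ x = Part.some x :=
  dif_pos hx

theorem barMap_succVertex (ξ : Fin (n - 1) →. Fin (n - 1)) (i : Fin (n - 1)) :
    barMap n ξ (succVertex n i) = (ξ i).map (succVertex n) := by
  rw [barMap, dif_neg (val_succVertex_ne_zero i)]
  rfl

theorem val_eq_zero_iff_of_mem_barMap {ξ : Fin (n - 1) →. Fin (n - 1)} {x u : Fin n}
    (hu : u ∈ barMap n ξ x) : (u : ℕ) = 0 ↔ (x : ℕ) = 0 := by
  rcases val_eq_zero_or_exists_succVertex_eq x with hx | ⟨i, rfl⟩
  · rw [barMap_of_val_eq_zero ξ hx, Part.mem_some_iff] at hu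
    rw [hu]
  · rw [barMap_succVertex, Part.mem_map_iff] at hu
    obtain ⟨j, -, rfl⟩ := hu
    exact iff_of_false (val_succVertex_ne_zero j) (val_succVertex_ne_zero i)

theorem zero_mem_barMap_zero [NeZero n] (ξ : Fin (n - 1) →. Fin (n - 1)) :
    (0 : Fin n) ∈ barMap n ξ 0 := by
  rw [barMap_of_val_eq_zero ξ (Fin.val_zero n)]
  exact Part.mem_some _

theorem barMap_one : barMap n 1 = 1 := by
  funext x
  rcases val_eq_zero_or_exists_succVertex_eq x with hx | ⟨i, rfl⟩
  · exact barMap_of_val_eq_zero 1 hx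
  · rw [barMap_succVertex, pfun_one_apply, Part.map_some, pfun_one_apply]

theorem barMap_mul (ξ ζ : Fin (n - 1) →. Fin (n - 1)) :
    barMap n (ξ * ζ) = barMap n ξ * barMap n ζ := by
  funext x
  rcases val_eq_zero_or_exists_succVertex_eq x with hx | ⟨i, rfl⟩
  · rw [pfun_mul_apply, barMap_of_val_eq_zero _ hx, barMap_of_val_eq_zero _ hx, Part.bind_some,
      barMap_of_val_eq_zero _ hx]
  · simp only [pfun_mul_apply, barMap_succVertex, Part.bind_map, Part.map_bind]

theorem barMap_injective : Function.Injective (barMap n) := fun ξ ζ h =>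
  funext fun i => Part.map_injective succVertex_injective <| by
    rw [← barMap_succVertex, ← barMap_succVertex, h]

theorem PInj.barMap {ξ : Fin (n - 1) →. Fin (n - 1)} (hξ : PInj ξ) : PInj (barMap n ξ) := by
  intro x y u hx hy
  have hxy : (x : ℕ) = 0 ↔ (y : ℕ) = 0 :=
    (val_eq_zero_iff_of_mem_barMap hx).symm.trans (val_eq_zero_iff_of_mem_barMap hy)
  rcases val_eq_zero_or_exists_succVertex_eq x with hx0 | ⟨i, rfl⟩
  · rw [barMap_of_val_eq_zero ξ hx0, Part.mem_some_iff] at hx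
    rw [barMap_of_val_eq_zero ξ (hxy.1 hx0), Part.mem_some_iff] at hy
    exact hx.symm.trans hy
  · obtain ⟨i', rfl⟩ := (val_eq_zero_or_exists_succVertex_eq y).resolve_left
      fun hy0 => val_succVertex_ne_zero i (hxy.2 hy0)
    rw [barMap_succVertex, Part.mem_map_iff] at hx hy
    obtain ⟨j, hj, rfl⟩ := hx
    obtain ⟨j', hj', hjj'⟩ := hy
    obtain rfl := succVertex_injective hjj'
    rw [hξ hj hj']

theorem isStarPI_barMap {ξ : Fin (n - 1) →. Fin (n - 1)} (hξ : PInj ξ) :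
    IsStarPI (barMap n ξ) :=
  ⟨hξ.barMap, fun _ _ _ _ hu hv => starDist_congr (hξ.barMap.eq_iff hu hv)
    (val_eq_zero_iff_of_mem_barMap hu) (val_eq_zero_iff_of_mem_barMap hv)⟩

def leafRestrict (n : ℕ) (α : Fin n →. Fin n) : Fin (n - 1) →. Fin (n - 1) :=
  fun i => (α (succVertex n i)).bind fun y => predVertex n y

theorem mem_leafRestrict {α : Fin n →. Fin n} {i j : Fin (n - 1)} :
    j ∈ leafRestrict n α i ↔ succVertex n j ∈ α (succVertex n i) := by
  simp only [leafRestrict, Part.mem_bind_iff, mem_predVertex, exists_eq_right']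

theorem PInj.leafRestrict {α : Fin n →. Fin n} (hα : PInj α) : PInj (leafRestrict n α) :=
  fun _ _ _ hi hi' => succVertex_injective (hα (mem_leafRestrict.1 hi) (mem_leafRestrict.1 hi'))

theorem barMap_leafRestrict [NeZero n] {α : Fin n →. Fin n} (hα : PInj α)
    (h0 : (0 : Fin n) ∈ α 0) : barMap n (leafRestrict n α) = α := by
  funext x
  rcases val_eq_zero_or_exists_succVertex_eq x with hx | ⟨i, rfl⟩
  · obtain rfl := Fin.val_eq_zero_iff.1 hx
    rw [barMap_of_val_eq_zero _ hx, Part.eq_some_iff.2 h0]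
  refine Part.ext fun u => ⟨?_, fun hu => ?_⟩
  · rw [barMap_succVertex, Part.mem_map_iff]
    rintro ⟨j, hj, rfl⟩
    exact mem_leafRestrict.1 hj
  · -- an injective map fixing the centre sends leaves to leaves
    have hu0 : (u : ℕ) ≠ 0 := fun hu0 => val_succVertex_ne_zero i <|
      Fin.val_eq_zero_iff.2 <| (hα.eq_iff hu h0).1 (Fin.val_eq_zero_iff.1 hu0)
    obtain ⟨j, rfl⟩ := (val_eq_zero_or_exists_succVertex_eq u).resolve_left hu0
    rw [barMap_succVertex]
    exact Part.mem_map _ (mem_leafRestrict.2 hu)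

theorem isStarPI_and_zero_mem_iff [NeZero n] {α : Fin n →. Fin n} :
    IsStarPI α ∧ (0 : Fin n) ∈ α 0 ↔
      ∃ ξ : Fin (n - 1) →. Fin (n - 1), PInj ξ ∧ α = barMap n ξ := by
  constructor
  · rintro ⟨hα, h0⟩
    exact ⟨leafRestrict n α, hα.1.leafRestrict, (barMap_leafRestrict hα.1 h0).symm⟩
  · rintro ⟨ξ, hξ, rfl⟩
    exact ⟨isStarPI_barMap hξ, zero_mem_barMap_zero ξ⟩

theorem statement5_general (n : ℕ) [NeZero n]
    (S : Set (Fin n →. Fin n))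
    (hS : S = { α | IsStarPI α ∧ (0 : Fin n) ∈ α 0 }) :
    (1 : Fin n →. Fin n) ∈ S ∧
    (∀ α β : Fin n →. Fin n, α ∈ S → β ∈ S → α * β ∈ S) ∧
    barMap n 1 = 1 ∧
    (∀ ξ ζ : Fin (n - 1) →. Fin (n - 1), PInj ξ → PInj ζ →
      barMap n (ξ * ζ) = barMap n ξ * barMap n ζ) ∧
    (∀ ξ ζ : Fin (n - 1) →. Fin (n - 1), PInj ξ → PInj ζ →
      barMap n ξ = barMap n ζ → ξ = ζ) ∧
    S = { α | ∃ ξ : Fin (n - 1) →. Fin (n - 1), PInj ξ ∧ α = barMap n ξ } := by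
  subst hS
  refine ⟨⟨isStarPI_one, Part.mem_some 0⟩, fun α β hα hβ => ⟨hα.1.mul hβ.1, ?_⟩, barMap_one,
    fun ξ ζ _ _ => barMap_mul ξ ζ, fun _ _ _ _ h => barMap_injective h,
    Set.ext fun _ => isStarPI_and_zero_mem_iff⟩
  exact Part.mem_bind_iff.2 ⟨0, hα.2, hβ.2⟩

/-- For `n ≥ 3`, `{α ∈ DPS_n : 0 ∈ Dom α and 0α = 0}` is a submonoid of `DPS_n`,
isomorphic to the symmetric inverse monoid on `{1,...,n-1}` via `ξ ↦ ξ̄`. -/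
theorem statement5 (n : ℕ) [NeZero n] (hn : 3 ≤ n)
    (S : Set (Fin n →. Fin n))
    (hS : S = { α | IsStarPI α ∧ (0 : Fin n) ∈ α 0 }) :
    (1 : Fin n →. Fin n) ∈ S ∧
    (∀ α β : Fin n →. Fin n, α ∈ S → β ∈ S → α * β ∈ S) ∧
    barMap n 1 = 1 ∧
    (∀ ξ ζ : Fin (n - 1) →. Fin (n - 1), PInj ξ → PInj ζ →
      barMap n (ξ * ζ) = barMap n ξ * barMap n ζ) ∧
    (∀ ξ ζ : Fin (n - 1) →. Fin (n - 1), PInj ξ → PInj ζ →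
      barMap n ξ = barMap n ζ → ξ = ζ) ∧
    S = { α | ∃ ξ : Fin (n - 1) →. Fin (n - 1), PInj ξ ∧ α = barMap n ξ } :=
  statement5_general n S hS

end DPSPaper
end

section
/- Let n ∈ ℕ and let α, β ∈ DPS_n. Then α and β are J-related in DPS_n (i.e., there exist u,v,s,t ∈ DPS_n with α = uβv and β = sαt) if and only if one of the following holds: (1) the domains of α and β both have exactly 1 element; (2) the domains of α and β have the same number of elements and 0 belongs to neither domain; (3) the domains of α and β have the same number of elements and 0 belongs to both domains. -/
/-!
For partial isometries, `α = u * β * v` is possible exactly when `dom α` embeds isometrically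
into `dom β`: the restriction of `u` to `dom α` is such an embedding, and conversely an
embedding `f` gives `α = f * β * ((f * β)⁻¹ * α)`. So `α J β` means isometric embeddings in both
directions between the domains, i.e. equal size and, as soon as the size is at least `2`, the
centre `0` lies in both domains or in neither: two vertices at distance `1` include the centre.
-/

namespace DPSPaper

section PartialMaps

variable {V : Type*}

theorem mem_mul {p q : V →. V} {x a : V} : a ∈ (p * q) x ↔ ∃ b ∈ p x, a ∈ q b :=
  Part.mem_bind_iff

noncomputable def pinv (p : V →. V) : V →. V :=
  fun y => ⟨∃ x, y ∈ p x, Classical.choose⟩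

theorem mem_pinv {p : V →. V} (hp : ∀ ⦃x y a : V⦄, a ∈ p x → a ∈ p y → x = y) {a y : V} :
    a ∈ pinv p y ↔ y ∈ p a :=
  ⟨fun ⟨h, ha⟩ => ha ▸ Classical.choose_spec h,
    fun h => ⟨⟨a, h⟩, hp (Classical.choose_spec (⟨a, h⟩ : ∃ x, y ∈ p x)) h⟩⟩

def ofSubtype {A : Set V} (f : A → V) : V →. V :=
  fun x => ⟨x ∈ A, fun h => f ⟨x, h⟩⟩

theorem mem_ofSubtype {A : Set V} {f : A → V} {x a : V} :
    a ∈ ofSubtype f x ↔ ∃ h : x ∈ A, f ⟨x, h⟩ = a :=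
  Iff.rfl

theorem eq_mul_pinv_mul {α w : V →. V} (hw : ∀ ⦃x y a : V⦄, a ∈ w x → a ∈ w y → x = y)
    (hdom : α.Dom ⊆ w.Dom) : α = w * (pinv w * α) := by
  ext x a
  simp only [mem_mul, mem_pinv hw]
  constructor
  · intro ha
    obtain ⟨c, hc⟩ := PFun.mem_dom w x |>.mp (hdom (PFun.mem_dom α x |>.mpr ⟨a, ha⟩))
    exact ⟨c, hc, x, hc, ha⟩
  · rintro ⟨c, hc, x', hc', ha⟩
    exact hw hc' hc ▸ ha

end PartialMaps

section StarGraph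

variable {n : ℕ}

theorem starDist_eq_zero_iff {x y : Fin n} : starDist n x y = 0 ↔ x = y := by
  unfold starDist
  split_ifs <;> simp_all

theorem starDist_eq [NeZero n] (x y : Fin n) :
    starDist n x y = if x = y then 0 else if x = 0 ∨ y = 0 then 1 else 2 := by
  simp [starDist, Fin.val_eq_zero_iff]

theorem starDist_congr_s7 [NeZero n] {x y x' y' : Fin n} (h : x = y ↔ x' = y')
    (hx : x = 0 ↔ x' = 0) (hy : y = 0 ↔ y' = 0) : starDist n x' y' = starDist n x y := by
  simp only [starDist_eq, h, hx, hy]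

theorem eq_zero_or_eq_zero_of_starDist_eq_one [NeZero n] {x y : Fin n}
    (h : starDist n x y = 1) : x = 0 ∨ y = 0 := by
  rw [starDist_eq] at h
  split_ifs at h with h₁ h₂
  · exact h₂
  · omega

theorem IsStarPI.mul_s7 {p q : Fin n →. Fin n} (hp : IsStarPI p) (hq : IsStarPI q) :
    IsStarPI (p * q) := by
  refine ⟨fun x y a hx hy => ?_, fun x y u v hu hv => ?_⟩
  · obtain ⟨b, hb, hab⟩ := mem_mul.mp hx
    obtain ⟨b', hb', hab'⟩ := mem_mul.mp hy
    exact hp.1 hb (hq.1 hab hab' ▸ hb')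
  · obtain ⟨b, hb, hub⟩ := mem_mul.mp hu
    obtain ⟨b', hb', hvb'⟩ := mem_mul.mp hv
    rw [hq.2 hub hvb', hp.2 hb hb']

theorem IsStarPI.pinv {p : Fin n →. Fin n} (hp : IsStarPI p) : IsStarPI (pinv p) := by
  refine ⟨fun x y a hx hy => ?_, fun x y u v hu hv => ?_⟩
  · rw [mem_pinv hp.1] at hx hy
    rw [← starDist_eq_zero_iff, hp.2 hx hy, starDist_eq_zero_iff]
  · rw [mem_pinv hp.1] at hu hv
    exact (hp.2 hu hv).symm

def IsStarIsometry {A B : Set (Fin n)} (f : A → B) : Prop :=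
  ∀ x y, starDist n (f x) (f y) = starDist n x y

variable {A B : Set (Fin n)}

theorem IsStarIsometry.injective {f : A → B} (hf : IsStarIsometry f) : Function.Injective f :=
  fun x y h => Subtype.ext <| starDist_eq_zero_iff.mp <| by rw [← hf, h, starDist_eq_zero_iff]

theorem IsStarIsometry.symm {e : A ≃ B} (he : IsStarIsometry e) : IsStarIsometry e.symm :=
  fun x y => by simpa using (he (e.symm x) (e.symm y)).symm

theorem isStarIsometry_of_injective [NeZero n] {f : A → B} (hf : Function.Injective f)
    (h0 : ∀ x, (f x : Fin n) = 0 ↔ (x : Fin n) = 0) : IsStarIsometry f :=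
  fun x y => starDist_congr_s7 (by rw [← Subtype.ext_iff, ← Subtype.ext_iff, hf.eq_iff])
    (h0 x).symm (h0 y).symm

theorem IsStarIsometry.isStarPI_ofSubtype {f : A → B} (hf : IsStarIsometry f) :
    IsStarPI (ofSubtype fun x => (f x : Fin n)) := by
  refine ⟨?_, ?_⟩
  · rintro x y a ⟨hx, rfl⟩ ⟨hy, hxy⟩
    exact congrArg Subtype.val (hf.injective (Subtype.ext hxy)).symm
  · rintro x y a b ⟨hx, rfl⟩ ⟨hy, rfl⟩
    exact hf ⟨x, hx⟩ ⟨y, hy⟩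

theorem IsStarIsometry.ncard_le {f : A → B} (hf : IsStarIsometry f) : A.ncard ≤ B.ncard := by
  rw [← Nat.card_coe_set_eq, ← Nat.card_coe_set_eq]
  exact Nat.card_le_card_of_injective f hf.injective

theorem IsStarIsometry.zero_mem [NeZero n] {f : A → B} (hf : IsStarIsometry f)
    (h0 : (0 : Fin n) ∈ A) (hA : 1 < A.ncard) : (0 : Fin n) ∈ B := by
  obtain ⟨y, hy, hy0⟩ := Set.exists_ne_of_one_lt_ncard hA 0
  have h1 : starDist n (f ⟨0, h0⟩) (f ⟨y, hy⟩) = 1 := by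
    rw [hf, starDist_eq, if_neg (Ne.symm hy0), if_pos (Or.inl rfl)]
  rcases eq_zero_or_eq_zero_of_starDist_eq_one h1 with h | h
  · exact h ▸ (f _).2
  · exact h ▸ (f _).2

theorem exists_isStarIsometry_equiv_of_ncard_eq_one (hA : A.ncard = 1) (hB : B.ncard = 1) :
    ∃ e : A ≃ B, IsStarIsometry e := by
  obtain ⟨e⟩ := Finite.card_eq.mp (show Nat.card A = Nat.card B by
    rw [Nat.card_coe_set_eq, Nat.card_coe_set_eq, hA, hB])
  have hsub : A.Subsingleton := Set.ncard_le_one_iff_subsingleton.mp hA.le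
  refine ⟨e, fun x y => ?_⟩
  rw [Subtype.ext (hsub x.2 y.2)]
  simp [starDist]

theorem exists_isStarIsometry_equiv [NeZero n] (hcard : A.ncard = B.ncard)
    (h0 : (0 : Fin n) ∈ A ↔ (0 : Fin n) ∈ B) : ∃ e : A ≃ B, IsStarIsometry e := by
  obtain ⟨e₀⟩ := Finite.card_eq.mp (show Nat.card A = Nat.card B by
    rw [Nat.card_coe_set_eq, Nat.card_coe_set_eq, hcard])
  by_cases hA : (0 : Fin n) ∈ A
  · -- correct `e₀` by a transposition so that the centre goes to the centre
    let e := e₀.trans (Equiv.swap (e₀ ⟨0, hA⟩) ⟨0, h0.mp hA⟩)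
    have he : ∀ x, e x = ⟨0, h0.mp hA⟩ ↔ x = ⟨0, hA⟩ := fun x => by
      rw [← e.injective.eq_iff, show e ⟨0, hA⟩ = ⟨0, h0.mp hA⟩ by simp [e]]
    exact ⟨e, isStarIsometry_of_injective e.injective fun x => by
      simpa only [Subtype.ext_iff] using he x⟩
  · refine ⟨e₀, isStarIsometry_of_injective e₀.injective fun x => ?_⟩
    exact iff_of_false (fun h => h0.not.mp hA (h ▸ (e₀ x).2)) (fun h => hA (h ▸ x.2))

theorem exists_isStarIsometry_both_ways_iff [NeZero n] :
    ((∃ f : A → B, IsStarIsometry f) ∧ ∃ g : B → A, IsStarIsometry g) ↔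
      ((A.ncard = 1 ∧ B.ncard = 1) ∨
        (A.ncard = B.ncard ∧ (0 : Fin n) ∉ A ∧ (0 : Fin n) ∉ B) ∨
        (A.ncard = B.ncard ∧ (0 : Fin n) ∈ A ∧ (0 : Fin n) ∈ B)) := by
  constructor
  · rintro ⟨⟨f, hf⟩, g, hg⟩
    have hcard : A.ncard = B.ncard := le_antisymm hf.ncard_le hg.ncard_le
    by_cases h1 : A.ncard = 1
    · exact Or.inl ⟨h1, hcard ▸ h1⟩
    have two_le {C : Set (Fin n)} (hC : (0 : Fin n) ∈ C) (hC1 : C.ncard ≠ 1) : 1 < C.ncard :=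
      lt_of_le_of_ne ((Set.ncard_pos).mpr ⟨0, hC⟩) (Ne.symm hC1)
    by_cases hA : (0 : Fin n) ∈ A
    · exact Or.inr <| Or.inr ⟨hcard, hA, hf.zero_mem hA (two_le hA h1)⟩
    · exact Or.inr <| Or.inl ⟨hcard, hA, fun hB => hA (hg.zero_mem hB (two_le hB (hcard ▸ h1)))⟩
  · intro h
    obtain ⟨e, he⟩ : ∃ e : A ≃ B, IsStarIsometry e := by
      rcases h with ⟨hA, hB⟩ | ⟨hcard, hA, hB⟩ | ⟨hcard, hA, hB⟩
      · exact exists_isStarIsometry_equiv_of_ncard_eq_one hA hB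
      · exact exists_isStarIsometry_equiv hcard (iff_of_false hA hB)
      · exact exists_isStarIsometry_equiv hcard (iff_of_true hA hB)
    exact ⟨⟨e, he⟩, e.symm, he.symm⟩

variable {α β : Fin n →. Fin n}

theorem IsStarPI.exists_isStarIsometry_of_eq_mul {u v : Fin n →. Fin n} (hu : IsStarPI u)
    (h : α = u * β * v) : ∃ f : α.Dom → β.Dom, IsStarIsometry f := by
  have hmaps (x : α.Dom) : ∃ b : β.Dom, (b : Fin n) ∈ u x := by
    obtain ⟨a, ha⟩ := (PFun.mem_dom α x).mp x.2
    obtain ⟨c, hc, -⟩ := mem_mul.mp (h ▸ ha : a ∈ (u * β * v) x)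
    obtain ⟨b, hb, hc⟩ := mem_mul.mp hc
    exact ⟨⟨b, (PFun.mem_dom β b).mpr ⟨c, hc⟩⟩, hb⟩
  choose f hf using hmaps
  exact ⟨f, fun x y => hu.2 (hf x) (hf y)⟩

theorem exists_eq_mul_iff_exists_isStarIsometry (hα : IsStarPI α) (hβ : IsStarPI β) :
    (∃ u v : Fin n →. Fin n, IsStarPI u ∧ IsStarPI v ∧ α = u * β * v) ↔
      ∃ f : α.Dom → β.Dom, IsStarIsometry f := by
  refine ⟨fun ⟨u, v, hu, _, h⟩ => hu.exists_isStarIsometry_of_eq_mul h, fun ⟨f, hf⟩ => ?_⟩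
  set u := ofSubtype fun x => (f x : Fin n)
  have hu : IsStarPI u := hf.isStarPI_ofSubtype
  have hdom : α.Dom ⊆ (u * β).Dom := fun x hx => by
    obtain ⟨c, hc⟩ := (PFun.mem_dom β _).mp (f ⟨x, hx⟩).2
    exact (PFun.mem_dom _ x).mpr ⟨c, mem_mul.mpr ⟨_, mem_ofSubtype.mpr ⟨hx, rfl⟩, hc⟩⟩
  exact ⟨u, pinv (u * β) * α, hu, (hu.mul_s7 hβ).pinv.mul_s7 hα, eq_mul_pinv_mul (hu.mul_s7 hβ).1 hdom⟩

end StarGraph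

theorem statement7 (n : ℕ) [NeZero n] (α β : Fin n →. Fin n)
    (hα : IsStarPI α) (hβ : IsStarPI β) :
    (∃ u v s t : Fin n →. Fin n, IsStarPI u ∧ IsStarPI v ∧ IsStarPI s ∧ IsStarPI t ∧
        α = u * β * v ∧ β = s * α * t) ↔
      ((α.Dom.ncard = 1 ∧ β.Dom.ncard = 1) ∨
        (α.Dom.ncard = β.Dom.ncard ∧ (0 : Fin n) ∉ α.Dom ∧ (0 : Fin n) ∉ β.Dom) ∨
        (α.Dom.ncard = β.Dom.ncard ∧ (0 : Fin n) ∈ α.Dom ∧ (0 : Fin n) ∈ β.Dom)) := by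
  rw [← exists_isStarIsometry_both_ways_iff, ← exists_eq_mul_iff_exists_isStarIsometry hα hβ,
    ← exists_eq_mul_iff_exists_isStarIsometry hβ hα]
  exact ⟨fun ⟨u, v, s, t, hu, hv, hs, ht, h₁, h₂⟩ => ⟨⟨u, v, hu, hv, h₁⟩, s, t, hs, ht, h₂⟩,
    fun ⟨⟨u, v, hu, hv, h₁⟩, s, t, hs, ht, h₂⟩ => ⟨u, v, s, t, hu, hv, hs, ht, h₁, h₂⟩⟩

end DPSPaper
end
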